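/- Suppose the system response Θ̃ = {R̃, M̃, Ñ, L̃} satisfies the robust SLS constraints for the plant (A, B₂, C₂) with perturbations (Δ₁, Δ₂), where Δ₁ ∈ RH∞, and that R̃ is invertible as a rational matrix. If ‖Δ₁‖ < 1 in H∞ norm, then the controller K̃ = L̃ − M̃R̃⁻¹Ñ internally stabilizes the plant (A, B₂, C₂) and achieves the closed-loop response Θ̂ given by R̂ = (I + Δ₁)⁻¹R̃, M̂ = M̃ − Δ₂(I + Δ₁)⁻¹R̃, N̂ = (I + Δ₁)⁻¹Ñ, L̂ = L̃ − Δ₂(I + Δ₁)⁻¹Ñ. -/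

import Mathlib

/- Preliminaries: transfer functions as real rational functions, RH∞, H∞ norms,
   System-Level Synthesis (SLS) constraints, controllers, closed-loop responses,
   coarse-grained identification, Gaussian vectors. -/

noncomputable section
open scoped Matrix BigOperators ENNReal
open MeasureTheory ProbabilityTheory Polynomial

namespace SLS

/-- Scalar transfer functions: real rational functions in `z`. -/
abbrev TF : Type := RatFunc ℝ

/-- Transfer matrices. -/
abbrev TMat (m n : ℕ) : Type := Matrix (Fin m) (Fin n) TF

/-- Embed a real matrix as a (constant) transfer matrix. -/
def rmap {m n : ℕ} (A : Matrix (Fin m) (Fin n) ℝ) : TMat m n := A.map RatFunc.C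

/-- Evaluate a scalar transfer function at a complex point. -/
def evalTF (f : TF) (z : ℂ) : ℂ :=
  (f.num.map (algebraMap ℝ ℂ)).eval z / (f.denom.map (algebraMap ℝ ℂ)).eval z

/-- Evaluate a transfer matrix at a complex point. -/
def evalMat {m n : ℕ} (F : TMat m n) (z : ℂ) : Matrix (Fin m) (Fin n) ℂ :=
  Matrix.of fun i j => evalTF (F i j) z

/-- Spectral norm (ℓ2 → ℓ2 operator norm) of a matrix over `ℝ` or `ℂ`. -/
def specNorm {𝕜 : Type} [RCLike 𝕜] {m n : ℕ} (M : Matrix (Fin m) (Fin n) 𝕜) : ℝ :=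
  ‖LinearMap.toContinuousLinearMap (Matrix.toEuclideanLin M)‖

/-- H∞ norm of a transfer matrix: sup over the unit circle of the spectral norm. -/
def hinfNorm {m n : ℕ} (F : TMat m n) : ℝ :=
  sSup {x : ℝ | ∃ z : ℂ, ‖z‖ = 1 ∧ x = specNorm (evalMat F z)}

/-- H∞ norm of a scalar transfer function. -/
def hinfNormTF (f : TF) : ℝ :=
  sSup {x : ℝ | ∃ z : ℂ, ‖z‖ = 1 ∧ x = ‖evalTF f z‖}

/-- A scalar transfer function is proper if its numerator degree does not exceed
its denominator degree. -/
def ProperTF (f : TF) : Prop := f.num.degree ≤ f.denom.degree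

/-- Strictly proper: vanishes at `z = ∞`. -/
def StrictlyProperTF (f : TF) : Prop := f.num.degree < f.denom.degree

/-- Stable: all poles lie strictly inside the open unit disk. -/
def StableTF (f : TF) : Prop :=
  ∀ z : ℂ, (f.denom.map (algebraMap ℝ ℂ)).eval z = 0 → ‖z‖ < 1

/-- Membership in RH∞ for scalar transfer functions: proper and stable. -/
def MemRHinfTF (f : TF) : Prop := ProperTF f ∧ StableTF f

/-- Membership in RH∞ for transfer matrices (entrywise). -/
def MemRHinf {m n : ℕ} (F : TMat m n) : Prop := ∀ i j, MemRHinfTF (F i j)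

/-- Strict properness of a transfer matrix (entrywise). -/
def StrictlyProper {m n : ℕ} (F : TMat m n) : Prop := ∀ i j, StrictlyProperTF (F i j)

/-- The transfer matrix `zI - A` for a real matrix `A`. -/
def zIA {n : ℕ} (A : Matrix (Fin n) (Fin n) ℝ) : TMat n n :=
  Matrix.diagonal (fun _ => (RatFunc.X : TF)) - rmap A

/-- A system response `Θ = {R, M, N, L}` for a plant with `n` states, `p` control
inputs and `q` measured outputs. -/
structure Response (n p q : ℕ) where
  R : TMat n n
  M : TMat p n
  N : TMat n q
  L : TMat p q

/-- The stability part of the SLS constraints: `R, M, N` strictly proper in RH∞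
and `L ∈ RH∞`. -/
def SLSStable {n p q : ℕ} (Θ : Response n p q) : Prop :=
  StrictlyProper Θ.R ∧ StrictlyProper Θ.M ∧ StrictlyProper Θ.N ∧
  MemRHinf Θ.R ∧ MemRHinf Θ.M ∧ MemRHinf Θ.N ∧ MemRHinf Θ.L

/-- The SLS constraints for the plant `(A, B₂, C₂)`:
`[zI − A, −B₂]·[[R, N],[M, L]] = [I, 0]`, `[[R, N],[M, L]]·[zI − A; −C₂] = [I; 0]`,
written blockwise, together with the stability conditions. -/
def SLSConstraints {n p q : ℕ} (A : Matrix (Fin n) (Fin n) ℝ)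
    (B₂ : Matrix (Fin n) (Fin p) ℝ) (C₂ : Matrix (Fin q) (Fin n) ℝ)
    (Θ : Response n p q) : Prop :=
  zIA A * Θ.R - rmap B₂ * Θ.M = 1 ∧
  zIA A * Θ.N - rmap B₂ * Θ.L = 0 ∧
  Θ.R * zIA A - Θ.N * rmap C₂ = 1 ∧
  Θ.M * zIA A - Θ.L * rmap C₂ = 0 ∧
  SLSStable Θ

/-- The robust SLS constraints with perturbations `(Δ₁, Δ₂)`: the second block
equation becomes `[[R, N],[M, L]]·[zI − A; −C₂] = [I + Δ₁; Δ₂]`. -/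
def RobustSLSConstraints {n p q : ℕ} (A : Matrix (Fin n) (Fin n) ℝ)
    (B₂ : Matrix (Fin n) (Fin p) ℝ) (C₂ : Matrix (Fin q) (Fin n) ℝ)
    (Δ₁ : TMat n n) (Δ₂ : TMat p n) (Θ : Response n p q) : Prop :=
  zIA A * Θ.R - rmap B₂ * Θ.M = 1 ∧
  zIA A * Θ.N - rmap B₂ * Θ.L = 0 ∧
  Θ.R * zIA A - Θ.N * rmap C₂ = 1 + Δ₁ ∧
  Θ.M * zIA A - Θ.L * rmap C₂ = Δ₂ ∧
  SLSStable Θ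

/-- The controller `K = L − M R⁻¹ N` induced by a system response. -/
def controller {n p q : ℕ} (Θ : Response n p q) : TMat p q :=
  Θ.L - Θ.M * Θ.R⁻¹ * Θ.N

/-- `K` achieves the closed-loop response `Θ'` on the plant `(A, B₂, C₂)`: in the
feedback loop `x = (zI − A)⁻¹(B₂u + δx)`, `y = C₂x + δy`, `u = Ky`, the transfer
matrices from `(δx, δy)` to `(x, u)` equal `[[R', N'],[M', L']]`. -/
def Achieves {n p q : ℕ} (A : Matrix (Fin n) (Fin n) ℝ)
    (B₂ : Matrix (Fin n) (Fin p) ℝ) (C₂ : Matrix (Fin q) (Fin n) ℝ)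
    (K : TMat p q) (Θ' : Response n p q) : Prop :=
  zIA A * Θ'.R = rmap B₂ * Θ'.M + 1 ∧
  zIA A * Θ'.N = rmap B₂ * Θ'.L ∧
  Θ'.M = K * rmap C₂ * Θ'.R ∧
  Θ'.L = K * rmap C₂ * Θ'.N + K

/-- `K` internally stabilizes the plant `(A, B₂, C₂)`: the four closed-loop
transfer matrices exist, `R', M', N'` are strictly proper, and all four lie in RH∞. -/
def InternallyStabilizes {n p q : ℕ} (A : Matrix (Fin n) (Fin n) ℝ)
    (B₂ : Matrix (Fin n) (Fin p) ℝ) (C₂ : Matrix (Fin q) (Fin n) ℝ)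
    (K : TMat p q) : Prop :=
  ∃ Θ' : Response n p q, Achieves A B₂ C₂ K Θ' ∧ SLSStable Θ'

/-! ### FIR SISO plants -/

/-- The down-shift matrix (ones on the subdiagonal). -/
def shiftMat (n : ℕ) : Matrix (Fin n) (Fin n) ℝ :=
  Matrix.of fun i j => if (i : ℕ) = (j : ℕ) + 1 then 1 else 0

/-- The first standard basis vector, as a column matrix. -/
def e1 (n : ℕ) : Matrix (Fin n) (Fin 1) ℝ :=
  Matrix.of fun i _ => if (i : ℕ) = 0 then 1 else 0

/-- A vector as a row matrix (`gᵀ`). -/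
def rowVec {n : ℕ} (g : Fin n → ℝ) : Matrix (Fin 1) (Fin n) ℝ :=
  Matrix.of fun _ j => g j

/-- The matrix `C₁ = [gᵀ; 0]`. -/
def C1mat {n : ℕ} (g : Fin n → ℝ) : Matrix (Fin 2) (Fin n) ℝ :=
  Matrix.of fun i j => if (i : ℕ) = 0 then g j else 0

/-- The matrix `D₁₂ = [0; 1]`. -/
def D12mat : Matrix (Fin 2) (Fin 1) ℝ :=
  Matrix.of fun i _ => if (i : ℕ) = 1 then 1 else 0

/-- Stack two scalar transfer functions into a 2×1 transfer matrix `[a; b]`. -/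
def col2 (a b : TF) : TMat 2 1 :=
  Matrix.of fun i _ => if (i : ℕ) = 0 then a else b

/-- The H∞ cost `J(g, Θ) = ‖[C₁, D₁₂]·[[R, N],[M, L]]·[B₁; D₂₁] + D₁₁‖` of a
system response for the generalized plant built from FIR coefficients `g`. -/
def cost {n nw : ℕ} (g : Fin n → ℝ) (B₁ : Matrix (Fin n) (Fin nw) ℝ)
    (D₂₁ : Matrix (Fin 1) (Fin nw) ℝ) (D₁₁ : Matrix (Fin 2) (Fin nw) ℝ)
    (Θ : Response n 1 1) : ℝ :=
  hinfNorm ((rmap (C1mat g) * Θ.R + rmap D12mat * Θ.M) * rmap B₁ +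
    (rmap (C1mat g) * Θ.N + rmap D12mat * Θ.L) * rmap D₂₁ + rmap D₁₁)

/-- The transfer matrix `[1 + g̃ᵀÑ; L̃]` and its H∞ norm. -/
def perfWeight {n : ℕ} (g : Fin n → ℝ) (Θ : Response n 1 1) : ℝ :=
  hinfNorm (col2 (1 + (rmap (rowVec g) * Θ.N) 0 0) (Θ.L 0 0))

/-- The robust SLS objective `Q(g̃, Θ̃, α) = J(g̃, Θ̃) + εα‖R̃B₁ + ÑD₂₁‖`. -/
def Qval {n nw : ℕ} (g : Fin n → ℝ) (B₁ : Matrix (Fin n) (Fin nw) ℝ)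
    (D₂₁ : Matrix (Fin 1) (Fin nw) ℝ) (D₁₁ : Matrix (Fin 2) (Fin nw) ℝ)
    (ε : ℝ) (Θ : Response n 1 1) (α : ℝ) : ℝ :=
  cost g B₁ D₂₁ D₁₁ Θ + ε * α * hinfNorm (Θ.R * rmap B₁ + Θ.N * rmap D₂₁)

/-- Feasibility for the robust SLS problem for the estimate `g̃` with uncertainty
parameter `ε`: `α > 0`, `Θ̃` satisfies the SLS constraints for `(Z, e₁, g̃ᵀ)`, and
`εα‖Ñ‖ + ‖[1 + g̃ᵀÑ; L̃]‖ ≤ α`. -/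
def RobustFeasible {n : ℕ} (g : Fin n → ℝ) (ε : ℝ) (Θ : Response n 1 1) (α : ℝ) : Prop :=
  0 < α ∧ SLSConstraints (shiftMat n) (e1 n) (rowVec g) Θ ∧
  ε * α * hinfNorm Θ.N + perfWeight g Θ ≤ α

/-- `(Θ̃, α)` is a minimizer of the robust SLS problem for `g̃`. -/
def RobustOptimal {n nw : ℕ} (g : Fin n → ℝ) (B₁ : Matrix (Fin n) (Fin nw) ℝ)
    (D₂₁ : Matrix (Fin 1) (Fin nw) ℝ) (D₁₁ : Matrix (Fin 2) (Fin nw) ℝ)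
    (ε : ℝ) (Θ : Response n 1 1) (α : ℝ) : Prop :=
  RobustFeasible g ε Θ α ∧
  ∀ Θ' α', RobustFeasible g ε Θ' α' → Qval g B₁ D₂₁ D₁₁ ε Θ α ≤ Qval g B₁ D₂₁ D₁₁ ε Θ' α'

/-- `Θ₀` is a minimizer of `J(g, ·)` over responses satisfying the SLS constraints
for the plant `(Z, e₁, gᵀ)`. -/
def OptimalResponse {n nw : ℕ} (g : Fin n → ℝ) (B₁ : Matrix (Fin n) (Fin nw) ℝ)
    (D₂₁ : Matrix (Fin 1) (Fin nw) ℝ) (D₁₁ : Matrix (Fin 2) (Fin nw) ℝ)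
    (Θ : Response n 1 1) : Prop :=
  SLSConstraints (shiftMat n) (e1 n) (rowVec g) Θ ∧
  ∀ Θ', SLSConstraints (shiftMat n) (e1 n) (rowVec g) Θ' →
    cost g B₁ D₂₁ D₁₁ Θ ≤ cost g B₁ D₂₁ D₁₁ Θ'

/-- The FIR transfer function `G(z) = Σ_{t=1}^{r−1} g_t z^{−t}` for
`g = (g₁, …, g_{r−1})`. -/
def firTF {n : ℕ} (g : Fin n → ℝ) : TF :=
  ∑ t : Fin n, RatFunc.C (g t) * (RatFunc.X)⁻¹ ^ ((t : ℕ) + 1)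

/-- The FIR transfer function `G(z) = Σ_{k=0}^{T−1} g_k z^{−k}` for a full
impulse-response vector `g_{0:T−1}`. -/
def firTF0 {T : ℕ} (g : Fin T → ℝ) : TF :=
  ∑ k : Fin T, RatFunc.C (g k) * (RatFunc.X)⁻¹ ^ (k : ℕ)

/-! ### Coarse-grained identification -/

/-- Euclidean (ℓ2) norm of a finite real vector. -/
def euclNorm {r : ℕ} (x : Fin r → ℝ) : ℝ := Real.sqrt (∑ i, x i ^ 2)

/-- ℓp norm of a finite real vector, `p ∈ [1, ∞]`. -/
def lpNorm {T : ℕ} (p : ℝ≥0∞) (x : Fin T → ℝ) : ℝ :=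
  if p = ∞ then ⨆ i, |x i| else (∑ i, |x i| ^ p.toReal) ^ (1 / p.toReal)

/-- `r^{2/max(p,2)}` as a real number. -/
def rExp (p : ℝ≥0∞) (r : ℕ) : ℝ := (r : ℝ) ^ ((2 / max p 2).toReal)

/-- The T×T lower-triangular Toeplitz matrix whose first column is `u`. -/
def toep {T : ℕ} (u : Fin T → ℝ) : Matrix (Fin T) (Fin T) ℝ :=
  Matrix.of fun i j =>
    if (j : ℕ) ≤ (i : ℕ) then u ⟨(i : ℕ) - (j : ℕ), lt_of_le_of_lt (Nat.sub_le _ _) i.isLt⟩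
    else 0

/-- The stacked input matrix `Z_mat = [Toep(u₁); …; Toep(u_m)]`. -/
def Zmat {T mE : ℕ} (u : Fin mE → Fin T → ℝ) : Matrix (Fin mE × Fin T) (Fin T) ℝ :=
  Matrix.of fun pr j => toep (u pr.1) pr.2 j

/-- `Z_matᵀ Z_mat`. -/
def ZtZ {T mE : ℕ} (u : Fin mE → Fin T → ℝ) : Matrix (Fin T) (Fin T) ℝ :=
  (Zmat u)ᵀ * Zmat u

/-- The least-squares estimate `g̃_{0:T−1} = (Z_matᵀZ_mat)⁻¹Z_matᵀ(y₁; …; y_m)`. -/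
def lsEst {T mE : ℕ} (u : Fin mE → Fin T → ℝ) (y : Fin mE → Fin T → ℝ) : Fin T → ℝ :=
  ((ZtZ u)⁻¹ * (Zmat u)ᵀ).mulVec fun pr => y pr.1 pr.2

/-- Pad the FIR coefficients `g = (g₁, …, g_{r−1})` to the impulse response
`g_{0:T−1} = (0, g₁, …, g_{r−1}, 0, …, 0)`. -/
def pad {r T : ℕ} (_ : r ≤ T) (g : Fin (r - 1) → ℝ) : Fin T → ℝ := fun k =>
  if hk : 1 ≤ (k : ℕ) ∧ (k : ℕ) < r then g ⟨(k : ℕ) - 1, by omega⟩ else 0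

/-- The estimated FIR coefficients `g̃ = (g̃₁, …, g̃_{r−1})` from coarse-grained
identification with true coefficients `g` and additive noise on the outputs. -/
def coarseEst {r T mE : ℕ} (hrT : r ≤ T) (u : Fin mE → Fin T → ℝ)
    (g : Fin (r - 1) → ℝ) (noise : Fin mE → Fin T → ℝ) : Fin (r - 1) → ℝ :=
  fun i =>
    lsEst u (fun k => (toep (u k)).mulVec (pad hrT g) + noise k)
      ⟨(i : ℕ) + 1, by have := i.isLt; omega⟩

/-! ### Gaussian random vectors -/

/-- The standard Gaussian measure on `Fin r → ℝ` (i.i.d. `N(0,1)` coordinates). -/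
def stdGaussianPi (r : ℕ) : Measure (Fin r → ℝ) :=
  Measure.pi fun _ => gaussianReal 0 1

/-- `δ` is a centered Gaussian random vector with covariance `Cov`: its law is the
pushforward of the standard Gaussian under some `A` with `AAᵀ = Cov`. -/
def IsCenteredGaussianVec {Ω : Type} [MeasurableSpace Ω] (P : Measure Ω) {r : ℕ}
    (δ : Ω → Fin r → ℝ) (Cov : Matrix (Fin r) (Fin r) ℝ) : Prop :=
  ∃ A : Matrix (Fin r) (Fin r) ℝ, A * Aᵀ = Cov ∧
    Measure.map δ P = Measure.map (fun x => A.mulVec x) (stdGaussianPi r)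

/-- The law of i.i.d. `N(0, σ²)` noise across `mE` experiments of length `T`. -/
def iidGaussianLaw (mE T : ℕ) (σ2 : ℝ) : Measure (Fin mE → Fin T → ℝ) :=
  Measure.pi fun _ => Measure.pi fun _ => gaussianReal 0 σ2.toNNReal

/-- Scalar multiplication of a transfer matrix by a scalar transfer function. -/
def sMulTF {m n : ℕ} (c : TF) (M : TMat m n) : TMat m n := Matrix.of fun i j => c * M i j

/-- The perturbed response `Θ̂` with `R̂ = (I+Δ₁)⁻¹R̃`, `M̂ = M̃ − Δ₂(I+Δ₁)⁻¹R̃`,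
`N̂ = (I+Δ₁)⁻¹Ñ`, `L̂ = L̃ − Δ₂(I+Δ₁)⁻¹Ñ` (with the rational matrix inverse). -/
def deltaPerturb {n p q : ℕ} (Δ₁ : TMat n n) (Δ₂ : TMat p n) (Θ : Response n p q) :
    Response n p q where
  R := (1 + Δ₁)⁻¹ * Θ.R
  M := Θ.M - Δ₂ * ((1 + Δ₁)⁻¹ * Θ.R)
  N := (1 + Δ₁)⁻¹ * Θ.N
  L := Θ.L - Δ₂ * ((1 + Δ₁)⁻¹ * Θ.N)

/-- The Sherman–Morrison form of the perturbed response in the FIR SISO case: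
`[[R̂, N̂],[M̂, L̂]] = [[R̃, Ñ],[M̃, L̃]] + (1 − δᵀÑ)⁻¹·[Ñδᵀ; L̃δᵀ]·[R̃, Ñ]`. -/
def smPerturb {n : ℕ} (δ : Fin n → ℝ) (Θ : Response n 1 1) : Response n 1 1 where
  R := Θ.R + sMulTF (1 - (rmap (rowVec δ) * Θ.N) 0 0)⁻¹ (Θ.N * rmap (rowVec δ) * Θ.R)
  M := Θ.M + sMulTF (1 - (rmap (rowVec δ) * Θ.N) 0 0)⁻¹ (Θ.L * rmap (rowVec δ) * Θ.R)
  N := Θ.N + sMulTF (1 - (rmap (rowVec δ) * Θ.N) 0 0)⁻¹ (Θ.N * rmap (rowVec δ) * Θ.N)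
  L := Θ.L + sMulTF (1 - (rmap (rowVec δ) * Θ.N) 0 0)⁻¹ (Θ.L * rmap (rowVec δ) * Θ.N)

/-- The block-diagonal matrix with `m` copies of `Toep(g)` on the diagonal
(the action of `Toep(g)` on the stacked process noise of `m` experiments). -/
def bigToep {T mE : ℕ} (g : Fin T → ℝ) : Matrix (Fin mE × Fin T) (Fin mE × Fin T) ℝ :=
  Matrix.of fun pr qr => if pr.1 = qr.1 then toep g pr.2 qr.2 else 0

end SLS

open SLS

/-!
With `K = L − M R⁻¹ N`, the robust constraints give `B₂ Δ₂ = (zI − A) Δ₁` and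
`K C₂ = M R⁻¹ (I + Δ₁) − Δ₂`; once `I + Δ₁` is invertible, the closed-loop identities for `Θ̂`
follow by matrix algebra. Stability of `Θ̂` reduces to `(I + Δ₁)⁻¹ ∈ RH∞`, i.e. to
`det (I + Δ₁)` being a unit of RH∞: not strictly proper, and without zeros in `|z| ≥ 1`.
Substituting `z = 1 / w` turns `Δ₁` into a matrix function holomorphic on the closed unit disk,
so by the maximum modulus principle its spectral norm stays below `‖Δ₁‖∞ < 1` on all of
`|z| ≥ 1`, including `z = ∞`, and there `I + Δ₁(z)` is invertible.
-/

namespace Subring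

variable {R : Type*} [CommRing R] (S : Subring R) {l m n : Type*}

lemma exists_matrix_map_subtype_eq {F : Matrix m n R} (hF : ∀ i j, F i j ∈ S) :
    ∃ F' : Matrix m n S, F'.map S.subtype = F :=
  ⟨fun i j => ⟨F i j, hF i j⟩, rfl⟩

lemma matrix_one_apply_mem [DecidableEq n] (i j : n) : (1 : Matrix n n R) i j ∈ S := by
  rw [Matrix.one_apply]; split_ifs
  exacts [one_mem S, zero_mem S]

lemma matrix_mul_apply_mem [Fintype n] {X : Matrix l n R} {Y : Matrix n m R}
    (hX : ∀ i j, X i j ∈ S) (hY : ∀ i j, Y i j ∈ S) (i : l) (j : m) : (X * Y) i j ∈ S :=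
  sum_mem fun k _ => mul_mem (hX i k) (hY k j)

lemma det_mem [Fintype n] [DecidableEq n] {F : Matrix n n R} (hF : ∀ i j, F i j ∈ S) :
    F.det ∈ S := by
  obtain ⟨F', rfl⟩ := S.exists_matrix_map_subtype_eq hF
  rw [← RingHom.mapMatrix_apply, ← RingHom.map_det]
  exact F'.det.2

lemma adjugate_apply_mem [Fintype n] [DecidableEq n] {F : Matrix n n R}
    (hF : ∀ i j, F i j ∈ S) (i j : n) : F.adjugate i j ∈ S := by
  obtain ⟨F', rfl⟩ := S.exists_matrix_map_subtype_eq hF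
  rw [← RingHom.mapMatrix_apply, ← RingHom.map_adjugate]
  exact (F'.adjugate i j).2

end Subring

namespace SLS

open Metric Filter Topology

lemma properTF_iff_intDegree_nonpos (f : TF) : ProperTF f ↔ f.intDegree ≤ 0 := by
  rcases eq_or_ne f 0 with rfl | hf
  · simp [ProperTF]
  rw [ProperTF, degree_eq_natDegree (RatFunc.num_ne_zero hf),
    degree_eq_natDegree f.denom_ne_zero, RatFunc.intDegree, sub_nonpos]
  norm_cast

lemma strictlyProperTF_iff_properTF_X_mul (f : TF) :
    StrictlyProperTF f ↔ ProperTF (RatFunc.X * f) := by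
  rcases eq_or_ne f 0 with rfl | hf
  · simp [StrictlyProperTF, ProperTF]
  rw [properTF_iff_intDegree_nonpos, RatFunc.intDegree_mul RatFunc.X_ne_zero hf,
    RatFunc.intDegree_X, StrictlyProperTF, degree_eq_natDegree (RatFunc.num_ne_zero hf),
    degree_eq_natDegree f.denom_ne_zero, RatFunc.intDegree, Nat.cast_withBot,
    Nat.cast_withBot, WithBot.coe_lt_coe]
  omega

lemma strictlyProperTF_zero : StrictlyProperTF 0 := by
  simp [StrictlyProperTF]

def properSubring : Subring TF where
  carrier := {f | ProperTF f}
  one_mem' := by simp [properTF_iff_intDegree_nonpos]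
  zero_mem' := by simp [properTF_iff_intDegree_nonpos]
  neg_mem' := by simp [properTF_iff_intDegree_nonpos]
  add_mem' {f g} hf hg := by
    change ProperTF f at hf; change ProperTF g at hg; change ProperTF (f + g)
    rw [properTF_iff_intDegree_nonpos] at *
    rcases eq_or_ne g 0 with rfl | hg0
    · simpa using hf
    rcases eq_or_ne (f + g) 0 with hfg | hfg
    · simp [hfg]
    exact (RatFunc.intDegree_add_le hg0 hfg).trans (max_le hf hg)
  mul_mem' {f g} hf hg := by
    change ProperTF f at hf; change ProperTF g at hg; change ProperTF (f * g)
    rw [properTF_iff_intDegree_nonpos] at *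
    rcases eq_or_ne f 0 with rfl | hf0
    · simp
    rcases eq_or_ne g 0 with rfl | hg0
    · simp
    rw [RatFunc.intDegree_mul hf0 hg0]
    omega

lemma mem_properSubring {f : TF} : f ∈ properSubring ↔ ProperTF f := Iff.rfl

lemma C_mem_properSubring (r : ℝ) : RatFunc.C r ∈ properSubring := by
  simp [mem_properSubring, properTF_iff_intDegree_nonpos]

lemma eval_denom_ne_zero_of_dvd {f : TF} {q : ℝ[X]} {z : ℂ} (h : f.denom ∣ q)
    (hq : (q.map (algebraMap ℝ ℂ)).eval z ≠ 0) : (f.denom.map (algebraMap ℝ ℂ)).eval z ≠ 0 := by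
  obtain ⟨c, rfl⟩ := h
  rw [Polynomial.map_mul, eval_mul] at hq
  exact left_ne_zero_of_mul hq

lemma denom_neg_dvd (f : TF) : (-f).denom ∣ f.denom :=
  (RatFunc.denom_dvd f.denom_ne_zero).2 ⟨-f.num, by rw [map_neg, neg_div, RatFunc.num_div_denom]⟩

def poleFree (z : ℂ) : Subring TF where
  carrier := {f | (f.denom.map (algebraMap ℝ ℂ)).eval z ≠ 0}
  one_mem' := by simp
  zero_mem' := by simp
  neg_mem' {f} hf := eval_denom_ne_zero_of_dvd (denom_neg_dvd f) hf
  add_mem' {f g} hf hg := eval_denom_ne_zero_of_dvd (RatFunc.denom_add_dvd f g)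
    (by rw [Polynomial.map_mul, eval_mul]; exact mul_ne_zero hf hg)
  mul_mem' {f g} hf hg := eval_denom_ne_zero_of_dvd (RatFunc.denom_mul_dvd f g)
    (by rw [Polynomial.map_mul, eval_mul]; exact mul_ne_zero hf hg)

lemma mem_poleFree {f : TF} {z : ℂ} :
    f ∈ poleFree z ↔ (f.denom.map (algebraMap ℝ ℂ)).eval z ≠ 0 := Iff.rfl

def stableSubring : Subring TF := ⨅ z : {z : ℂ // 1 ≤ ‖z‖}, poleFree z

lemma mem_stableSubring {f : TF} : f ∈ stableSubring ↔ StableTF f := by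
  simp only [stableSubring, Subring.mem_iInf, Subtype.forall, mem_poleFree, StableTF]
  exact forall_congr' fun z =>
    ⟨fun h he => lt_of_not_ge fun hz => h hz he, fun h hz he => (h he).not_ge hz⟩

lemma StableTF.mem_poleFree {f : TF} (hf : StableTF f) {z : ℂ} (hz : 1 ≤ ‖z‖) :
    f ∈ poleFree z :=
  fun h => (hf z h).not_ge hz

def rhinf : Subring TF := properSubring ⊓ stableSubring

lemma mem_rhinf {f : TF} : f ∈ rhinf ↔ MemRHinfTF f := by
  rw [rhinf, Subring.mem_inf, mem_stableSubring]; rfl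

section Stability

variable {a b c : ℕ}

lemma MemRHinf.mul {X : TMat a b} {Y : TMat b c} (hX : MemRHinf X) (hY : MemRHinf Y) :
    MemRHinf (X * Y) := fun i j => mem_rhinf.1 <|
  rhinf.matrix_mul_apply_mem (fun i j => mem_rhinf.2 (hX i j)) (fun i j => mem_rhinf.2 (hY i j)) i j

lemma MemRHinf.sub {X Y : TMat a b} (hX : MemRHinf X) (hY : MemRHinf Y) : MemRHinf (X - Y) :=
  fun i j => mem_rhinf.1 (sub_mem (mem_rhinf.2 (hX i j)) (mem_rhinf.2 (hY i j)))

lemma StrictlyProper.sub {X Y : TMat a b} (hX : StrictlyProper X) (hY : StrictlyProper Y) :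
    StrictlyProper (X - Y) := fun i j => by
  have hX' := (strictlyProperTF_iff_properTF_X_mul _).1 (hX i j)
  have hY' := (strictlyProperTF_iff_properTF_X_mul _).1 (hY i j)
  rw [Matrix.sub_apply, strictlyProperTF_iff_properTF_X_mul, mul_sub, ← mem_properSubring]
  exact sub_mem hX' hY'

lemma StrictlyProper.mul_left {X : TMat a b} {Y : TMat b c} (hX : ∀ i j, ProperTF (X i j))
    (hY : StrictlyProper Y) : StrictlyProper (X * Y) := fun i j => by
  rw [strictlyProperTF_iff_properTF_X_mul, Matrix.mul_apply, Finset.mul_sum, ← mem_properSubring]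
  refine sum_mem fun k _ => ?_
  rw [mul_left_comm]
  exact mul_mem (hX i k) ((strictlyProperTF_iff_properTF_X_mul _).1 (hY k j))

lemma mul_X_mem_rhinf {f : TF} (hf : StrictlyProperTF f) (hst : StableTF f) :
    f * RatFunc.X ∈ rhinf := by
  refine mem_rhinf.2 ⟨?_, (mem_stableSubring.1 (mul_mem (mem_stableSubring.2 hst) ?_))⟩
  · rw [mul_comm]; exact (strictlyProperTF_iff_properTF_X_mul f).1 hf
  · simp [mem_stableSubring, StableTF]

lemma rmap_memRHinf (A : Matrix (Fin a) (Fin b) ℝ) : MemRHinf (rmap A) := fun i j =>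
  ⟨C_mem_properSubring _, by simp [rmap, StableTF]⟩

lemma memRHinf_mul_zIA_sub {n : ℕ} {M : TMat a n} {L : TMat a b} (hMs : StrictlyProper M)
    (hM : MemRHinf M) (hL : MemRHinf L) (A : Matrix (Fin n) (Fin n) ℝ)
    (C : Matrix (Fin b) (Fin n) ℝ) : MemRHinf (M * zIA A - L * rmap C) := by
  refine MemRHinf.sub ?_ (hL.mul (rmap_memRHinf C))
  rw [zIA, Matrix.mul_sub]
  refine MemRHinf.sub (fun i j => ?_) (hM.mul (rmap_memRHinf A))
  rw [Matrix.mul_diagonal]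
  exact mem_rhinf.1 (mul_X_mem_rhinf (hMs i j) (hM i j).2)

lemma SLSStable.deltaPerturb {n p q : ℕ} {Δ₁ : TMat n n} {Δ₂ : TMat p n} {Θ : Response n p q}
    (hΘ : SLSStable Θ) (hG : MemRHinf (1 + Δ₁)⁻¹) (hΔ₂ : MemRHinf Δ₂) :
    SLSStable (deltaPerturb Δ₁ Δ₂ Θ) := by
  obtain ⟨hRs, hMs, hNs, hR, hM, hN, hL⟩ := hΘ
  have hRs' := StrictlyProper.mul_left (fun i j => (hG i j).1) hRs
  have hNs' := StrictlyProper.mul_left (fun i j => (hG i j).1) hNs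
  have hR' := hG.mul hR
  have hN' := hG.mul hN
  exact ⟨hRs', hMs.sub (.mul_left (fun i j => (hΔ₂ i j).1) hRs'), hNs', hR',
    hM.sub (hΔ₂.mul hR'), hN', hL.sub (hΔ₂.mul hN')⟩

end Stability

lemma evalTF_eq_eval (f : TF) (z : ℂ) : evalTF f z = RatFunc.eval (algebraMap ℝ ℂ) z f := by
  simp [evalTF, RatFunc.eval, Polynomial.eval_map]

lemma eval₂_denom_ne_zero {f : TF} {z : ℂ} (hf : f ∈ poleFree z) :
    f.denom.eval₂ (algebraMap ℝ ℂ) z ≠ 0 := by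
  rwa [mem_poleFree, eval_map] at hf

def evalAt (z : ℂ) : poleFree z →+* ℂ where
  toFun f := evalTF f z
  map_one' := by simp [evalTF]
  map_zero' := by simp [evalTF]
  map_add' f g := by
    simp only [Subring.coe_add, evalTF_eq_eval]
    exact RatFunc.eval_add (f := algebraMap ℝ ℂ) (a := z) (eval₂_denom_ne_zero f.2)
      (eval₂_denom_ne_zero g.2)
  map_mul' f g := by
    simp only [Subring.coe_mul, evalTF_eq_eval]
    exact RatFunc.eval_mul (f := algebraMap ℝ ℂ) (a := z) (eval₂_denom_ne_zero f.2)
      (eval₂_denom_ne_zero g.2)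

lemma evalMat_map_subtype {m n : ℕ} {z : ℂ} (F : Matrix (Fin m) (Fin n) (poleFree z)) :
    evalMat (F.map (poleFree z).subtype) z = F.map (evalAt z) :=
  rfl

lemma evalTF_det {n : ℕ} {F : TMat n n} {z : ℂ} (hF : ∀ i j, F i j ∈ poleFree z) :
    evalTF F.det z = (evalMat F z).det := by
  obtain ⟨F', rfl⟩ := (poleFree z).exists_matrix_map_subtype_eq hF
  rw [evalMat_map_subtype, ← RingHom.mapMatrix_apply, ← RingHom.map_det,
    ← RingHom.mapMatrix_apply, ← RingHom.map_det]
  rfl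

lemma evalMat_one_add {n : ℕ} {F : TMat n n} {z : ℂ} (hF : ∀ i j, F i j ∈ poleFree z) :
    evalMat (1 + F) z = 1 + evalMat F z := by
  obtain ⟨F', rfl⟩ := (poleFree z).exists_matrix_map_subtype_eq hF
  have h : (1 + F').map (poleFree z).subtype = 1 + F'.map (poleFree z).subtype := by
    simpa using map_add (poleFree z).subtype.mapMatrix 1 F'
  have h' : (1 + F').map (evalAt z) = 1 + F'.map (evalAt z) := by
    simpa using map_add (evalAt z).mapMatrix 1 F'
  rw [← h, evalMat_map_subtype, evalMat_map_subtype, h']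

lemma aeval_reverse_mul_pow (p : ℝ[X]) {z : ℂ} (hz : z ≠ 0) :
    aeval z⁻¹ p.reverse * z ^ p.natDegree = aeval z p := by
  have : Invertible z := invertibleOfNonzero hz
  simpa [aeval_def, invOf_eq_inv] using eval₂_reverse_mul_pow (algebraMap ℝ ℂ) z p

lemma evalTF_eq_div_aeval (f : TF) (z : ℂ) : evalTF f z = aeval z f.num / aeval z f.denom := by
  simp [evalTF, eval_map_algebraMap]

/-- `f (1 / w)`, written with reversed polynomials so that for `f ∈ RH∞` it is holomorphic on
the closed unit disk, `w = 0` (that is, `z = ∞`) included. -/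
def flipTF (f : TF) (w : ℂ) : ℂ :=
  aeval w f.num.reverse * w ^ (f.denom.natDegree - f.num.natDegree) / aeval w f.denom.reverse

lemma flipTF_inv {f : TF} (hf : ProperTF f) {z : ℂ} (hz : z ≠ 0) (hpole : f ∈ poleFree z) :
    flipTF f z⁻¹ = evalTF f z := by
  have hQ : aeval z f.denom ≠ 0 := by rwa [mem_poleFree, eval_map_algebraMap] at hpole
  rcases eq_or_ne f.num 0 with h0 | h0
  · simp [flipTF, evalTF_eq_div_aeval, h0]
  obtain ⟨k, hk⟩ := Nat.exists_eq_add_of_le (natDegree_le_natDegree hf)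
  rw [flipTF, evalTF_eq_div_aeval, ← aeval_reverse_mul_pow _ hz, ← aeval_reverse_mul_pow _ hz, hk,
    Nat.add_sub_cancel_left]
  rw [← aeval_reverse_mul_pow _ hz, hk] at hQ
  rw [pow_add, inv_pow]
  field_simp

lemma one_le_norm_inv {𝕜 : Type*} [NormedDivisionRing 𝕜] {w : 𝕜} (hw0 : w ≠ 0) (hw : ‖w‖ ≤ 1) : 1 ≤ ‖w⁻¹‖ := by
  rw [norm_inv]; exact one_le_inv_iff₀.2 ⟨norm_pos_iff.2 hw0, hw⟩

lemma aeval_reverse_denom_ne_zero {f : TF} (hf : StableTF f) {w : ℂ} (hw : ‖w‖ ≤ 1) :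
    aeval w f.denom.reverse ≠ 0 := by
  rcases eq_or_ne w 0 with rfl | hw0
  · rw [← coeff_zero_eq_aeval_zero', coeff_zero_reverse]
    simpa using f.denom_ne_zero
  have hz := one_le_norm_inv hw0 hw
  have h := aeval_reverse_mul_pow f.denom (inv_ne_zero hw0)
  rw [inv_inv] at h
  intro h0
  rw [h0, zero_mul, eq_comm, ← eval_map_algebraMap] at h
  exact hf.mem_poleFree hz h

lemma differentiableAt_flipTF {f : TF} (hf : StableTF f) {w : ℂ} (hw : ‖w‖ ≤ 1) :
    DifferentiableAt ℂ (flipTF f) w :=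
  ((Polynomial.differentiable_aeval _ _).mul (differentiableAt_pow _)).div
    (Polynomial.differentiable_aeval _ _) (aeval_reverse_denom_ne_zero hf hw)

lemma flipTF_zero {f : TF} (hf : StrictlyProperTF f) : flipTF f 0 = 0 := by
  rcases eq_or_ne f.num 0 with h0 | h0
  · simp [flipTF, h0]
  have : f.num.natDegree < f.denom.natDegree := natDegree_lt_natDegree h0 hf
  simp [flipTF, zero_pow (Nat.sub_ne_zero_of_lt this)]

def flipMat {n : ℕ} (F : TMat n n) (w : ℂ) : Matrix (Fin n) (Fin n) ℂ :=
  Matrix.of fun i j => flipTF (F i j) w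

lemma flipMat_inv {n : ℕ} {F : TMat n n} (hF : MemRHinf F) {z : ℂ} (hz : 1 ≤ ‖z‖) :
    flipMat F z⁻¹ = evalMat F z := by
  have hz0 : z ≠ 0 := norm_pos_iff.1 (one_pos.trans_le hz)
  ext i j
  exact flipTF_inv (hF i j).1 hz0 ((hF i j).2.mem_poleFree hz)

lemma continuous_specNorm {m n : ℕ} :
    Continuous (specNorm : Matrix (Fin m) (Fin n) ℂ → ℝ) :=
  continuous_norm.comp (LinearMap.continuous_of_finiteDimensional
    (Matrix.toEuclideanLin.trans (LinearMap.toContinuousLinearMap (𝕜 := ℂ)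
      (E := EuclideanSpace ℂ (Fin n)) (F' := EuclideanSpace ℂ (Fin m)))).toLinearMap)

lemma continuousAt_evalTF {f : TF} {z : ℂ} (hf : f ∈ poleFree z) : ContinuousAt (evalTF f) z := by
  rw [mem_poleFree, eval_map_algebraMap] at hf
  simp only [funext (evalTF_eq_div_aeval f)]
  exact ((Polynomial.continuous_aeval _).continuousAt).div
    (Polynomial.continuous_aeval _).continuousAt hf

lemma differentiableAt_toEuclideanCLM {n : ℕ} {Φ : ℂ → Matrix (Fin n) (Fin n) ℂ} {w : ℂ}
    (hΦ : ∀ i j, DifferentiableAt ℂ (fun u => Φ u i j) w) :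
    DifferentiableAt ℂ (fun u => Matrix.toEuclideanCLM (n := Fin n) (𝕜 := ℂ) (Φ u)) w := by
  have h : (fun u => Matrix.toEuclideanCLM (n := Fin n) (𝕜 := ℂ) (Φ u)) = fun u =>
      ∑ i, ∑ j, Φ u i j • Matrix.toEuclideanCLM (n := Fin n) (𝕜 := ℂ) (Matrix.single i j 1) := by
    funext u
    conv_lhs => rw [Matrix.matrix_eq_sum_single (Φ u)]
    simp [map_sum, ← map_smul, Matrix.smul_single]
  rw [h]
  exact DifferentiableAt.fun_sum fun i _ => DifferentiableAt.fun_sum fun j _ =>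
    (hΦ i j).smul_const _

theorem specNorm_le_of_forall_norm_eq_one {n : ℕ} {Φ : ℂ → Matrix (Fin n) (Fin n) ℂ} {C : ℝ}
    (hΦ : ∀ i j w, ‖w‖ ≤ 1 → DifferentiableAt ℂ (fun u => Φ u i j) w)
    (hC : ∀ u : ℂ, ‖u‖ = 1 → specNorm (Φ u) ≤ C) {w : ℂ} (hw : ‖w‖ ≤ 1) :
    specNorm (Φ w) ≤ C := by
  have hd : DiffContOnCl ℂ (fun u => Matrix.toEuclideanCLM (n := Fin n) (𝕜 := ℂ) (Φ u))
      (ball 0 1) := by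
    refine DifferentiableOn.diffContOnCl fun u hu => ?_
    rw [closure_ball _ one_ne_zero, mem_closedBall_zero_iff] at hu
    exact (differentiableAt_toEuclideanCLM fun i j => hΦ i j u hu).differentiableWithinAt
  refine Complex.norm_le_of_forall_mem_frontier_norm_le isBounded_ball hd (fun u hu => ?_) ?_
  · rw [frontier_ball _ one_ne_zero, mem_sphere_zero_iff_norm] at hu
    exact hC u hu
  · rwa [closure_ball _ one_ne_zero, mem_closedBall_zero_iff]

lemma det_one_add_ne_zero_of_specNorm_lt_one {n : ℕ} {M : Matrix (Fin n) (Fin n) ℂ}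
    (hM : specNorm M < 1) : (1 + M).det ≠ 0 := by
  have h : IsUnit (Matrix.toEuclideanCLM (n := Fin n) (𝕜 := ℂ) (1 + M)) := by
    rw [map_add, map_one, ← sub_neg_eq_add]
    exact isUnit_one_sub_of_norm_lt_one (by rwa [norm_neg])
  exact ((Matrix.isUnit_iff_isUnit_det _).1 ((MulEquiv.isUnit_map _).1 h)).ne_zero

lemma specNorm_evalMat_le_hinfNorm {m n : ℕ} {F : TMat m n} (hF : ∀ i j, StableTF (F i j))
    {z : ℂ} (hz : ‖z‖ = 1) : specNorm (evalMat F z) ≤ hinfNorm F := by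
  have hcont : ContinuousOn (fun z => specNorm (evalMat F z)) (sphere 0 1) := by
    refine continuous_specNorm.comp_continuousOn fun u hu => ContinuousAt.continuousWithinAt ?_
    rw [mem_sphere_zero_iff_norm] at hu
    exact continuousAt_pi.2 fun i => continuousAt_pi.2 fun j =>
      continuousAt_evalTF ((hF i j).mem_poleFree hu.ge)
  refine le_csSup (((isCompact_sphere 0 1).image_of_continuousOn hcont).bddAbove.mono ?_)
    ⟨z, hz, rfl⟩
  rintro _ ⟨u, hu, rfl⟩
  exact ⟨u, mem_sphere_zero_iff_norm.2 hu, rfl⟩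

lemma one_add_mem_rhinf {n : ℕ} {Δ : TMat n n} (hΔ : MemRHinf Δ) : MemRHinf (1 + Δ) :=
  fun i j => mem_rhinf.1 (add_mem (rhinf.matrix_one_apply_mem i j) (mem_rhinf.2 (hΔ i j)))

lemma flipTF_det {n : ℕ} {F : TMat n n} (hF : MemRHinf F) {w : ℂ} (hw : ‖w‖ ≤ 1) :
    flipTF F.det w = (flipMat F w).det := by
  have hdet : MemRHinfTF F.det := mem_rhinf.1 (rhinf.det_mem fun i j => mem_rhinf.2 (hF i j))
  have hne : ∀ u : ℂ, u ≠ 0 → ‖u‖ ≤ 1 → flipTF F.det u = (flipMat F u).det := by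
    intro u hu0 hu
    have hz : 1 ≤ ‖u⁻¹‖ := one_le_norm_inv hu0 hu
    rw [← inv_inv u, flipTF_inv hdet.1 (inv_ne_zero hu0) (hdet.2.mem_poleFree hz),
      evalTF_det fun i j => (hF i j).2.mem_poleFree hz, flipMat_inv hF hz]
  rcases eq_or_ne w 0 with rfl | hw0
  · have hcont : ContinuousAt (fun u => (flipMat F u).det) 0 :=
      (continuous_id.matrix_det).continuousAt.comp (continuousAt_pi.2 fun i =>
        continuousAt_pi.2 fun j => (differentiableAt_flipTF (hF i j).2 hw).continuousAt)
    refine tendsto_nhds_unique_of_eventuallyEq (l := 𝓝[≠] 0)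
      ((differentiableAt_flipTF hdet.2 hw).continuousAt.tendsto.mono_left nhdsWithin_le_nhds)
      (hcont.tendsto.mono_left nhdsWithin_le_nhds) ?_
    filter_upwards [nhdsWithin_le_nhds (closedBall_mem_nhds (0 : ℂ) one_pos),
      self_mem_nhdsWithin] with u hu hu0 using hne u hu0 (mem_closedBall_zero_iff.1 hu)
  · exact hne w hw0 hw

lemma det_flipMat_one_add_ne_zero {n : ℕ} {Δ : TMat n n} (hΔ : MemRHinf Δ)
    (hsmall : hinfNorm Δ < 1) {w : ℂ} (hw : ‖w‖ ≤ 1) : (flipMat (1 + Δ) w).det ≠ 0 := by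
  have h1Δ := one_add_mem_rhinf hΔ
  have hbound : specNorm (flipMat (1 + Δ) w - 1) ≤ hinfNorm Δ := by
    refine specNorm_le_of_forall_norm_eq_one (Φ := fun u => flipMat (1 + Δ) u - 1)
      (fun i j u hu => ?_) (fun u hu => ?_) hw
    · show DifferentiableAt ℂ
        (fun u => flipTF ((1 + Δ) i j) u - (1 : Matrix (Fin n) (Fin n) ℂ) i j) u
      exact (differentiableAt_flipTF (h1Δ i j).2 hu).sub (differentiableAt_const _)
    · have hu' : ‖u⁻¹‖ = 1 := by rw [norm_inv, hu, inv_one]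
      rw [← inv_inv u, flipMat_inv h1Δ hu'.ge,
        evalMat_one_add fun i j => (hΔ i j).2.mem_poleFree hu'.ge, add_sub_cancel_left]
      exact specNorm_evalMat_le_hinfNorm (fun i j => (hΔ i j).2) hu'
  simpa using det_one_add_ne_zero_of_specNorm_lt_one (hbound.trans_lt hsmall)

lemma inv_mem_rhinf {f : TF} (hf : f ∈ rhinf) (hsp : ¬ StrictlyProperTF f)
    (hz : ∀ z : ℂ, 1 ≤ ‖z‖ → evalTF f z ≠ 0) : f⁻¹ ∈ rhinf := by
  have hf0 : f ≠ 0 := by rintro rfl; exact hsp strictlyProperTF_zero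
  rw [mem_rhinf] at hf ⊢
  refine ⟨?_, fun z hz0 => lt_of_not_ge fun h => hz z h ?_⟩
  · rw [strictlyProperTF_iff_properTF_X_mul, properTF_iff_intDegree_nonpos,
      RatFunc.intDegree_mul RatFunc.X_ne_zero hf0, RatFunc.intDegree_X] at hsp
    have := (properTF_iff_intDegree_nonpos f).1 hf.1
    rw [properTF_iff_intDegree_nonpos, RatFunc.intDegree_inv]
    omega
  · obtain ⟨c, hc⟩ := RatFunc.denom_inv_dvd hf0
    rw [evalTF, hc, Polynomial.map_mul, eval_mul, hz0, zero_mul, zero_div]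

theorem memRHinf_inv_one_add {n : ℕ} {Δ : TMat n n} (hΔ : MemRHinf Δ)
    (hsmall : hinfNorm Δ < 1) : IsUnit (1 + Δ).det ∧ MemRHinf (1 + Δ)⁻¹ := by
  have h1Δ := one_add_mem_rhinf hΔ
  have hd : MemRHinfTF (1 + Δ).det := mem_rhinf.1 (rhinf.det_mem fun i j => mem_rhinf.2 (h1Δ i j))
  have hflip : ∀ w : ℂ, ‖w‖ ≤ 1 → flipTF (1 + Δ).det w ≠ 0 := fun w hw => by
    rw [flipTF_det h1Δ hw]; exact det_flipMat_one_add_ne_zero hΔ hsmall hw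
  have hsp : ¬ StrictlyProperTF (1 + Δ).det := fun h => hflip 0 (by simp) (flipTF_zero h)
  have heval : ∀ z : ℂ, 1 ≤ ‖z‖ → evalTF (1 + Δ).det z ≠ 0 := fun z hz => by
    have hz0 : z ≠ 0 := norm_pos_iff.1 (one_pos.trans_le hz)
    rw [← flipTF_inv hd.1 hz0 (hd.2.mem_poleFree hz)]
    exact hflip _ (by rw [norm_inv]; exact inv_le_one_of_one_le₀ hz)
  have hd0 : (1 + Δ).det ≠ 0 := by rintro h; exact hsp (h ▸ strictlyProperTF_zero)
  refine ⟨isUnit_iff_ne_zero.2 hd0, fun i j => mem_rhinf.1 ?_⟩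
  rw [Matrix.inv_def, Ring.inverse_eq_inv, Matrix.smul_apply, smul_eq_mul]
  exact mul_mem (inv_mem_rhinf (mem_rhinf.2 hd) hsp heval)
    (rhinf.adjugate_apply_mem (fun i j => mem_rhinf.2 (h1Δ i j)) i j)

section ClosedLoopAlgebra

variable {K : Type*} [CommRing K] {n p q : Type*} [Fintype n] [DecidableEq n] [Fintype q]
  {Z R Δ₁ G : Matrix n n K} {B : Matrix n p K} {C : Matrix q n K}
  {M Δ₂ : Matrix p n K} {N : Matrix n q K} {L : Matrix p q K}

lemma mul_Δ₂_eq_mul_Δ₁ [Fintype p] (h₁ : Z * R - B * M = 1) (h₂ : Z * N - B * L = 0)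
    (h₃ : R * Z - N * C = 1 + Δ₁) (h₄ : M * Z - L * C = Δ₂) : B * Δ₂ = Z * Δ₁ := by
  have hBM : B * M = Z * R - 1 := by rw [← h₁, sub_sub_cancel]
  have hBL : B * L = Z * N := (sub_eq_zero.1 h₂).symm
  calc B * Δ₂ = B * M * Z - B * L * C := by
        rw [← h₄, Matrix.mul_sub, Matrix.mul_assoc, Matrix.mul_assoc]
    _ = Z * (R * Z - N * C) - Z := by
        rw [hBM, hBL, Matrix.sub_mul, Matrix.one_mul, Matrix.mul_sub, Matrix.mul_assoc,
          Matrix.mul_assoc, sub_right_comm]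
    _ = Z * Δ₁ := by rw [h₃, Matrix.mul_add, Matrix.mul_one, add_sub_cancel_left]

lemma mul_mul_eq_sub_mul_Δ₂ [Fintype p] (hΔ : B * Δ₂ = Z * Δ₁) (hG : (1 + Δ₁) * G = 1)
    {m : Type*} (Y : Matrix n m K) :
    Z * (G * Y) = Z * Y - B * (Δ₂ * (G * Y)) := by
  have hG' : G = 1 - Δ₁ * G := by rw [← hG, Matrix.add_mul, Matrix.one_mul, add_sub_cancel_right]
  conv_lhs => rw [hG']
  rw [← Matrix.mul_assoc B, hΔ, Matrix.sub_mul, Matrix.one_mul, Matrix.mul_sub, Matrix.mul_assoc,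
    Matrix.mul_assoc]

lemma controller_mul_eq (hR : IsUnit R.det) (h₃ : R * Z - N * C = 1 + Δ₁)
    (h₄ : M * Z - L * C = Δ₂) : (L - M * R⁻¹ * N) * C = M * R⁻¹ * (1 + Δ₁) - Δ₂ := by
  have hNC : N * C = R * Z - (1 + Δ₁) := by rw [← h₃, sub_sub_cancel]
  rw [← h₄, Matrix.sub_mul, Matrix.mul_assoc _ N, hNC, Matrix.mul_sub, Matrix.mul_assoc,
    ← Matrix.mul_assoc R⁻¹, Matrix.nonsing_inv_mul _ hR, Matrix.one_mul]
  abel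

end ClosedLoopAlgebra

theorem achieves_deltaPerturb {n p q : ℕ} {A : Matrix (Fin n) (Fin n) ℝ}
    {B₂ : Matrix (Fin n) (Fin p) ℝ} {C₂ : Matrix (Fin q) (Fin n) ℝ} {Δ₁ : TMat n n}
    {Δ₂ : TMat p n} {Θ : Response n p q}
    (h₁ : zIA A * Θ.R - rmap B₂ * Θ.M = 1) (h₂ : zIA A * Θ.N - rmap B₂ * Θ.L = 0)
    (h₃ : Θ.R * zIA A - Θ.N * rmap C₂ = 1 + Δ₁) (h₄ : Θ.M * zIA A - Θ.L * rmap C₂ = Δ₂)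
    (hR : IsUnit Θ.R.det) (hΔ₁ : IsUnit (1 + Δ₁).det) :
    Achieves A B₂ C₂ (controller Θ) (deltaPerturb Δ₁ Δ₂ Θ) := by
  have hG := Matrix.mul_nonsing_inv _ hΔ₁
  have hΔ := mul_Δ₂_eq_mul_Δ₁ h₁ h₂ h₃ h₄
  have hKCG : controller Θ * rmap C₂ * (1 + Δ₁)⁻¹ = Θ.M * Θ.R⁻¹ - Δ₂ * (1 + Δ₁)⁻¹ := by
    rw [controller, controller_mul_eq hR h₃ h₄, Matrix.sub_mul, Matrix.mul_assoc _ (1 + Δ₁), hG,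
      Matrix.mul_one]
  refine ⟨?_, ?_, ?_, ?_⟩ <;> dsimp only [deltaPerturb]
  · rw [mul_mul_eq_sub_mul_Δ₂ hΔ hG, sub_eq_iff_eq_add.1 h₁, Matrix.mul_sub]
    abel
  · rw [mul_mul_eq_sub_mul_Δ₂ hΔ hG, sub_eq_zero.1 h₂, Matrix.mul_sub]
  · rw [← Matrix.mul_assoc (controller Θ * rmap C₂), hKCG, Matrix.sub_mul, Matrix.mul_assoc Θ.M,
      Matrix.nonsing_inv_mul _ hR, Matrix.mul_one, Matrix.mul_assoc Δ₂]
  · rw [← Matrix.mul_assoc (controller Θ * rmap C₂), hKCG, controller, Matrix.sub_mul,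
      Matrix.mul_assoc Δ₂]
    abel

end SLS

/-- small-gain sufficient condition. Under the robust SLS constraints with
`Δ₁ ∈ RH∞`, `R̃` invertible and `‖Δ₁‖ < 1` in H∞ norm, the controller `K̃ = L̃ − M̃R̃⁻¹Ñ`
internally stabilizes `(A, B₂, C₂)` and achieves the perturbed response `Θ̂`. -/
theorem statement_6 {n p q : ℕ} (A : Matrix (Fin n) (Fin n) ℝ)
    (B₂ : Matrix (Fin n) (Fin p) ℝ) (C₂ : Matrix (Fin q) (Fin n) ℝ)
    (Δ₁ : TMat n n) (Δ₂ : TMat p n) (Θ : Response n p q)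
    (hrob : RobustSLSConstraints A B₂ C₂ Δ₁ Δ₂ Θ)
    (hΔ₁ : MemRHinf Δ₁)
    (hR : IsUnit Θ.R.det)
    (hsmall : hinfNorm Δ₁ < 1) :
    InternallyStabilizes A B₂ C₂ (controller Θ) ∧
      Achieves A B₂ C₂ (controller Θ) (deltaPerturb Δ₁ Δ₂ Θ) := by
  obtain ⟨h₁, h₂, h₃, h₄, hstab⟩ := hrob
  obtain ⟨hunit, hG⟩ := memRHinf_inv_one_add hΔ₁ hsmall
  have hΔ₂ : MemRHinf Δ₂ := by
    obtain ⟨-, hMs, -, -, hM, -, hL⟩ := hstab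
    exact h₄ ▸ memRHinf_mul_zIA_sub hMs hM hL A C₂
  have hach := achieves_deltaPerturb h₁ h₂ h₃ h₄ hR hunit
  exact ⟨⟨_, hach, hstab.deltaPerturb hG hΔ₂⟩, hach⟩
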